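/- Let a, b, c, d be nonnegative integers with b, d positive, gcd(a,b) = 1, gcd(c,d) = 1, and bc − ad = 2^k for some nonnegative integer k. Then (i) every rational number x with a/b ≤ x ≤ c/d appears in the tree T(a/b, c/d), and (ii) there exists L such that for all n ≥ L, every pair of consecutive entries p, q of S(n)(a/b, c/d) has cross-determinant 1, i.e. den(p)·num(q) − num(p)·den(q) = 1. -/

import Mathlib

/-- The mediant of two rationals `p` and `q`: `(num p + num q) / (den p + den q)`. -/
def mediant (p q : ℚ) : ℚ := ((p.num + q.num : ℤ) : ℚ) / ((p.den + q.den : ℕ) : ℚ)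

/-- Insert between every pair of consecutive entries of a list their mediant. -/
def insertMediants : List ℚ → List ℚ
  | [] => []
  | [p] => [p]
  | p :: q :: rest => p :: mediant p q :: insertMediants (q :: rest)

/-- The sequences of the tree `T(r, s)`: `S r s 0 = [r, s]`, and each successive
sequence is obtained by inserting mediants between consecutive entries. -/
def S (r s : ℚ) : ℕ → List ℚ
  | 0 => [r, s]
  | n + 1 => insertMediants (S r s n)


/-!
Write `Δ(p, q) = den p · num q - num p · den q`. The mediant `m` of `p` and `q` is
`(num p + num q) / (den p + den q)` divided by some factor `g ≥ 1`, and bilinearity gives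
`Δ(p, m) · g = Δ(m, q) · g = Δ(p, q)`. If `Δ(p, q)` is even then `g` is even as well, because
the reductions mod 2 of `(num p, den p)` and `(num q, den q)` are nonzero vectors of `𝔽₂²` with
vanishing determinant, hence equal. So a cross-determinant dividing `2 ^ e` splits into two
dividing `2 ^ (e - 1)`, and from row `k` on all of them are `1`.

For (i), if `p < x < q` then `x` lies in `[p, m]` or `[m, q]`, and the positive integer
`Δ(p, x) + Δ(x, q)` strictly drops on passing to that half, since e.g.
`Δ(x, m) · g = Δ(x, q) - Δ(p, x)`. The halves reappear as consecutive pairs of row `1`, and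
every later row contains the rows grown from a consecutive pair as a contiguous block.
-/

def crossDet (p q : ℚ) : ℤ := p.den * q.num - p.num * q.den

theorem crossDet_pos_iff {p q : ℚ} : 0 < crossDet p q ↔ p < q := by
  rw [crossDet, Rat.lt_iff, sub_pos, mul_comm (p.den : ℤ)]

theorem crossDet_nonneg_iff {p q : ℚ} : 0 ≤ crossDet p q ↔ p ≤ q := by
  rw [crossDet, Rat.le_iff, sub_nonneg, mul_comm (p.den : ℤ)]

theorem crossDet_self (p : ℚ) : crossDet p p = 0 := by
  rw [crossDet]; ring

theorem crossDet_swap (p q : ℚ) : crossDet q p = -crossDet p q := by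
  rw [crossDet, crossDet]; ring

theorem exists_pos_eq_mul_div_num_and_eq_mul_div_den (n d : ℤ) (hd : 0 < d) :
    ∃ g : ℤ, 0 < g ∧ n = g * ((n : ℚ) / d).num ∧ d = g * ((n : ℚ) / d).den := by
  obtain ⟨g, hn, hd'⟩ := Rat.exists_eq_mul_div_num_and_eq_mul_div_den n hd.ne'
  exact ⟨g, pos_of_mul_pos_left (hd' ▸ hd) (by positivity), hn, hd'⟩

theorem exists_pos_sub_eq_mul_crossDet_div (a b c d : ℤ) (hb : 0 < b) (hd : 0 < d) :
    ∃ g : ℤ, 0 < g ∧ b * c - a * d = g * crossDet (a / b) (c / d) := by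
  obtain ⟨g₁, hg₁, ha, hb'⟩ := exists_pos_eq_mul_div_num_and_eq_mul_div_den a b hb
  obtain ⟨g₂, hg₂, hc, hd'⟩ := exists_pos_eq_mul_div_num_and_eq_mul_div_den c d hd
  refine ⟨g₁ * g₂, mul_pos hg₁ hg₂, ?_⟩
  rw [crossDet]
  linear_combination
    c * hb' + g₁ * ((a : ℚ) / b).den * hc - d * ha - g₁ * ((a : ℚ) / b).num * hd'

theorem exists_mediant_scale (p q : ℚ) : ∃ g : ℤ, 0 < g ∧
    p.num + q.num = g * (mediant p q).num ∧ (p.den + q.den : ℤ) = g * (mediant p q).den := by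
  have h := exists_pos_eq_mul_div_num_and_eq_mul_div_den (p.num + q.num) (p.den + q.den)
    (by positivity)
  rwa [show ((p.den + q.den : ℤ) : ℚ) = ((p.den + q.den : ℕ) : ℚ) by push_cast; rfl] at h

theorem crossDet_mediant_mul {p q : ℚ} {g : ℤ} (hnum : p.num + q.num = g * (mediant p q).num)
    (hden : (p.den + q.den : ℤ) = g * (mediant p q).den) (x : ℚ) :
    crossDet x (mediant p q) * g = crossDet x p + crossDet x q := by
  rw [crossDet, crossDet, crossDet]
  linear_combination -(x.den : ℤ) * hnum + x.num * hden

theorem mediant_crossDet_mul {p q : ℚ} {g : ℤ} (hnum : p.num + q.num = g * (mediant p q).num)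
    (hden : (p.den + q.den : ℤ) = g * (mediant p q).den) (x : ℚ) :
    crossDet (mediant p q) x * g = crossDet p x + crossDet q x := by
  rw [crossDet, crossDet, crossDet]
  linear_combination (x.den : ℤ) * hnum - x.num * hden

theorem not_even_num_and_den (p : ℚ) : ¬(Even p.num ∧ Even (p.den : ℤ)) := fun ⟨hn, hd⟩ =>
  Int.prime_two.not_isUnit ((Rat.isCoprime_num_den p).isUnit_of_dvd' hn.two_dvd hd.two_dvd)

theorem even_num_add_and_den_add {p q : ℚ} (h : Even (crossDet p q)) :
    Even (p.num + q.num) ∧ Even ((p.den : ℤ) + q.den) := by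
  have hp := not_even_num_and_den p
  have hq := not_even_num_and_den q
  rw [crossDet] at h
  simp only [Int.even_sub, Int.even_add, Int.even_mul] at h ⊢
  tauto

theorem even_of_even_crossDet {p q : ℚ} {g : ℤ} (hnum : p.num + q.num = g * (mediant p q).num)
    (hden : (p.den + q.den : ℤ) = g * (mediant p q).den) (h : Even (crossDet p q)) : Even g := by
  obtain ⟨hn, hd⟩ := even_num_add_and_den_add h
  rw [hnum, Int.even_mul] at hn
  rw [hden, Int.even_mul] at hd
  by_contra hg
  exact not_even_num_and_den (mediant p q) ⟨hn.resolve_left hg, hd.resolve_left hg⟩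

theorem dvd_two_pow_pred_of_mul_eq {D D' g : ℤ} {e : ℕ} (hDg : D' * g = D) (hD : D ∣ 2 ^ e)
    (heven : Even D → Even g) : D' ∣ 2 ^ (e - 1) := by
  have hD'D : D' ∣ D := Dvd.intro g hDg
  cases e with
  | zero => exact hD'D.trans hD
  | succ e =>
    rw [Nat.add_sub_cancel]
    by_cases hDe : Even D
    · obtain ⟨t, rfl⟩ := heven hDe
      have h2 : 2 * D' ∣ 2 * 2 ^ e := by
        rw [← pow_succ']
        exact (Dvd.intro t (by rw [← hDg]; ring)).trans hD
      exact (mul_dvd_mul_iff_left two_ne_zero).mp h2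
    · have hcop : IsCoprime (2 ^ (e + 1)) D :=
        (Int.prime_two.coprime_iff_not_dvd.mpr (by rwa [even_iff_two_dvd] at hDe)).pow_left
      exact hD'D.trans (hcop.isUnit_of_dvd' hD dvd_rfl).dvd

def CrossDetDvdTwoPow (e : ℕ) (p q : ℚ) : Prop := 0 < crossDet p q ∧ crossDet p q ∣ 2 ^ e

theorem CrossDetDvdTwoPow.sub_one_mediant {e : ℕ} {p q : ℚ} (h : CrossDetDvdTwoPow e p q) :
    CrossDetDvdTwoPow (e - 1) p (mediant p q) ∧ CrossDetDvdTwoPow (e - 1) (mediant p q) q := by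
  obtain ⟨hpos, hdvd⟩ := h
  obtain ⟨g, hg, hnum, hden⟩ := exists_mediant_scale p q
  have heven := even_of_even_crossDet hnum hden
  have hleft : crossDet p (mediant p q) * g = crossDet p q := by
    rw [crossDet_mediant_mul hnum hden, crossDet_self, zero_add]
  have hright : crossDet (mediant p q) q * g = crossDet p q := by
    rw [mediant_crossDet_mul hnum hden, crossDet_self, add_zero]
  exact ⟨⟨pos_of_mul_pos_left (hleft ▸ hpos) hg.le, dvd_two_pow_pred_of_mul_eq hleft hdvd heven⟩,
    ⟨pos_of_mul_pos_left (hright ▸ hpos) hg.le, dvd_two_pow_pred_of_mul_eq hright hdvd heven⟩⟩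

theorem head?_insertMediants : ∀ l : List ℚ, (insertMediants l).head? = l.head?
  | [] => rfl
  | [_] => rfl
  | _ :: _ :: _ => rfl

theorem isChain_insertMediants {R R' : ℚ → ℚ → Prop}
    (hR : ∀ p q, R p q → R' p (mediant p q) ∧ R' (mediant p q) q) :
    ∀ {l : List ℚ}, l.IsChain R → (insertMediants l).IsChain R'
  | [], _ => List.IsChain.nil
  | [_], _ => List.IsChain.singleton _
  | p :: q :: rest, h => by
    rw [List.isChain_cons_cons] at h
    obtain ⟨hpm, hmq⟩ := hR p q h.1
    refine List.isChain_cons_cons.mpr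
      ⟨hpm, List.isChain_cons.mpr ⟨?_, isChain_insertMediants hR h.2⟩⟩
    simpa [head?_insertMediants] using hmq

theorem isChain_S {r s : ℚ} {k : ℕ} (h : CrossDetDvdTwoPow k r s) :
    ∀ n, (S r s n).IsChain (CrossDetDvdTwoPow (k - n))
  | 0 => List.isChain_pair.mpr h
  | n + 1 => by
    rw [← Nat.sub_sub]
    exact isChain_insertMediants (fun _ _ => CrossDetDvdTwoPow.sub_one_mediant) (isChain_S h n)

theorem insertMediants_prefix_append : ∀ l₁ l₂ : List ℚ,
    insertMediants l₁ <+: insertMediants (l₁ ++ l₂)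
  | [], _ => List.nil_prefix
  | [_], [] => List.prefix_refl _
  | [_], _ :: _ => (List.prefix_cons_inj _).mpr List.nil_prefix
  | _ :: q :: rest, l₂ =>
    (List.prefix_cons_inj _).mpr
      ((List.prefix_cons_inj _).mpr (insertMediants_prefix_append (q :: rest) l₂))

theorem insertMediants_suffix_cons (a : ℚ) :
    ∀ l : List ℚ, insertMediants l <:+ insertMediants (a :: l)
  | [] => List.nil_suffix
  | _ :: _ => (List.suffix_cons _ _).trans (List.suffix_cons _ _)

theorem insertMediants_suffix_append (l₁ l₂ : List ℚ) :
    insertMediants l₂ <:+ insertMediants (l₁ ++ l₂) := by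
  induction l₁ with
  | nil => exact List.suffix_refl _
  | cons a l₁ ih => exact ih.trans (insertMediants_suffix_cons a _)

theorem List.IsInfix.insertMediants {l₁ l₂ : List ℚ} (h : l₁ <:+: l₂) :
    insertMediants l₁ <:+: insertMediants l₂ := by
  obtain ⟨A, B, rfl⟩ := h
  rw [List.append_assoc]
  exact (insertMediants_prefix_append l₁ B).isInfix.trans
    (insertMediants_suffix_append A (l₁ ++ B)).isInfix

theorem S_infix_S_add {p q r s : ℚ} {n : ℕ} (h : [p, q] <:+: S r s n) :
    ∀ j, S p q j <:+: S r s (n + j)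
  | 0 => h
  | j + 1 => (S_infix_S_add h j).insertMediants

theorem exists_mem_S {p q x : ℚ} (hpx : p ≤ x) (hxq : x ≤ q) : ∃ n, x ∈ S p q n := by
  induction hN : (crossDet p x + crossDet x q).toNat using Nat.strong_induction_on
    generalizing p q with
  | _ N ih =>
  rcases hpx.eq_or_lt with rfl | hpx'
  · exact ⟨0, List.mem_cons_self⟩
  rcases hxq.eq_or_lt with rfl | hxq'
  · exact ⟨0, by simp [S]⟩
  have hpx_pos := crossDet_pos_iff.mpr hpx'
  have hxq_pos := crossDet_pos_iff.mpr hxq'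
  obtain ⟨g, hg, hnum, hden⟩ := exists_mediant_scale p q
  rcases le_total x (mediant p q) with hxm | hmx
  · have hmul : crossDet x (mediant p q) * g = crossDet x q - crossDet p x := by
      rw [crossDet_mediant_mul hnum hden, crossDet_swap p]; ring
    have hlt : crossDet x (mediant p q) < crossDet x q := by
      nlinarith [crossDet_nonneg_iff.mpr hxm]
    obtain ⟨n, hn⟩ := ih _ (by omega) hpx hxm rfl
    exact ⟨1 + n, (S_infix_S_add (⟨[], [q], rfl⟩ : [p, mediant p q] <:+: S p q 1) n).subset hn⟩
  · have hmul : crossDet (mediant p q) x * g = crossDet p x - crossDet x q := by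
      rw [mediant_crossDet_mul hnum hden, crossDet_swap q]; ring
    have hlt : crossDet (mediant p q) x < crossDet p x := by
      nlinarith [crossDet_nonneg_iff.mpr hmx]
    obtain ⟨n, hn⟩ := ih _ (by omega) hmx hxq rfl
    exact ⟨1 + n, (S_infix_S_add (⟨[p], [], rfl⟩ : [mediant p q, q] <:+: S p q 1) n).subset hn⟩

theorem appears_of_crossDeterminant_pow_two (a b c d : ℕ) (hb : 0 < b) (hd : 0 < d)
    (k : ℕ) (hdet : (b : ℤ) * c - a * d = 2 ^ k) :
    (∀ x : ℚ, (a : ℚ) / b ≤ x → x ≤ (c : ℚ) / d →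
      ∃ n, x ∈ S ((a : ℚ) / b) ((c : ℚ) / d) n) ∧
    (∃ L, ∀ n, L ≤ n → ∀ j, (hj : j + 1 < (S ((a : ℚ) / b) ((c : ℚ) / d) n).length) →
      ((S ((a : ℚ) / b) ((c : ℚ) / d) n)[j].den : ℤ) *
          (S ((a : ℚ) / b) ((c : ℚ) / d) n)[j + 1].num -
        (S ((a : ℚ) / b) ((c : ℚ) / d) n)[j].num *
          ((S ((a : ℚ) / b) ((c : ℚ) / d) n)[j + 1].den : ℤ) = 1) := by
  obtain ⟨g, hg, hscale⟩ := exists_pos_sub_eq_mul_crossDet_div a b c d (by omega) (by omega)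
  push_cast at hscale
  rw [hdet] at hscale
  have hrs : CrossDetDvdTwoPow k (a / b) (c / d) :=
    ⟨pos_of_mul_pos_right (hscale ▸ pow_pos two_pos k) hg.le, Dvd.intro_left g hscale.symm⟩
  refine ⟨fun x => exists_mem_S, k, fun n hn j hj => ?_⟩
  obtain ⟨hpos, hdvd⟩ := (isChain_S hrs n).getElem j hj
  rw [Nat.sub_eq_zero_of_le hn, pow_zero] at hdvd
  exact Int.eq_one_of_dvd_one hpos.le hdvd
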